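/- arXiv:1606.09395 — 4 statements merged into one kernel-verified Lean document; each statement's English description precedes it below -/
import Mathlib

section
/- Let R = (√13−1)/2 and δ = (5−√13)/6. For all nonnegative reals w_i, w_j, w_f and every real w_e, if w_j ≤ w_f, w_i ≤ w_f, and w_e ≥ w_j ≥ 0, then w_j + (1−δ)·w_i − (R−1+2δ)·w_e ≤ (3 − R − 3δ)·w_f = w_f. -/
theorem stmt9 (R δ : ℝ)
    (hR : R = (Real.sqrt 13 - 1) / 2)
    (hδ : δ = (5 - Real.sqrt 13) / 6)
    (w_i w_j w_e w_f : ℝ) (hi : 0 ≤ w_i) (hj : 0 ≤ w_j) (he : 0 ≤ w_e) (hf : 0 ≤ w_f)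
    (hjf : w_j ≤ w_f) (hif : w_i ≤ w_f) (hje : w_j ≤ w_e) :
    w_j + (1 - δ) * w_i - (R - 1 + 2 * δ) * w_e ≤ (3 - R - 3 * δ) * w_f ∧
    (3 - R - 3 * δ) * w_f = w_f := by
  have hsq : Real.sqrt 13 ^ 2 = 13 := Real.sq_sqrt (by norm_num)
  have h3 : (3:ℝ) ≤ Real.sqrt 13 := by nlinarith [Real.sqrt_nonneg 13]
  have h4 : Real.sqrt 13 ≤ 4 := by nlinarith [Real.sqrt_nonneg 13]
  subst hR hδ
  constructor
  · nlinarith [mul_nonneg (sub_nonneg.2 hje) (sub_nonneg.2 h3),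
      mul_nonneg (sub_nonneg.2 hif) (sub_nonneg.2 h3),
      mul_nonneg (sub_nonneg.2 hjf) (sub_nonneg.2 h4)]
  · ring
end

section
/- Let α = (√13+3)/4 and R = (√13−1)/2. For all nonnegative reals w_i, w_j, w_e, w_f such that 2α·w_e ≥ w_i + w_j, w_j ≤ w_f, w_i ≤ w_f, and w_i > R·w_e, we have w_j + w_i − R·w_e ≤ (2 − R/α)·w_f < R·w_f. -/
/-!
With `α = (√13 + 3)/4` and `R = (√13 - 1)/2` one has `R/α = 8 - 2√13`. The budget
`2α w_e ≥ w_i + w_j` gives `R w_e ≥ R/(2α) · (w_i + w_j)`, so the left-hand side is at most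
`(1 - R/(2α)) (w_i + w_j) ≤ (2 - R/α) w_f`, since `1 - R/(2α) ≥ 0`. Finally
`2 - R/α = 2√13 - 6 < (√13 - 1)/2 = R` amounts to `3√13 < 11`, and `w_f > 0` because
`w_f ≥ w_i > R w_e ≥ 0`.
-/

lemma add_sub_mul_le_two_sub_div_mul {α R w_i w_j w_e w_f : ℝ} (hα : 0 < α) (hR : 0 ≤ R)
    (hRα : R ≤ 2 * α) (h1 : w_i + w_j ≤ 2 * α * w_e) (h2 : w_j ≤ w_f) (h3 : w_i ≤ w_f) :
    w_j + w_i - R * w_e ≤ (2 - R / α) * w_f := by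
  have hc : 0 ≤ 1 - R / (2 * α) := by
    rw [sub_nonneg, div_le_one (by positivity)]
    exact hRα
  have hcharge : R / (2 * α) * (w_i + w_j) ≤ R * w_e := by
    calc R / (2 * α) * (w_i + w_j) ≤ R / (2 * α) * (2 * α * w_e) := by gcongr
      _ = R * w_e := by field_simp
  calc w_j + w_i - R * w_e ≤ (1 - R / (2 * α)) * (w_i + w_j) := by linarith
    _ ≤ (1 - R / (2 * α)) * (2 * w_f) := by gcongr; linarith
    _ = (2 - R / α) * w_f := by field_simp

lemma three_lt_sqrt_thirteen : 3 < √13 :=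
  (Real.lt_sqrt (by norm_num)).2 (by norm_num)

lemma sqrt_thirteen_lt : √13 < 11 / 3 :=
  (Real.sqrt_lt' (by norm_num)).2 (by norm_num)

lemma sqrt_thirteen_sub_one_div_two_div :
    (√13 - 1) / 2 / ((√13 + 3) / 4) = 8 - 2 * √13 := by
  have hs : √13 ^ 2 = 13 := Real.sq_sqrt (by norm_num)
  rw [div_eq_iff (by positivity)]
  linear_combination (1 / 2 : ℝ) * hs

theorem stmt11_general (α R : ℝ)
    (hα : α = (Real.sqrt 13 + 3) / 4)
    (hR : R = (Real.sqrt 13 - 1) / 2)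
    (w_i w_j w_e w_f : ℝ) (he : 0 ≤ w_e)
    (h1 : 2 * α * w_e ≥ w_i + w_j) (h2 : w_j ≤ w_f) (h3 : w_i ≤ w_f)
    (h4 : w_i > R * w_e) :
    w_j + w_i - R * w_e ≤ (2 - R / α) * w_f ∧ (2 - R / α) * w_f < R * w_f := by
  have hs3 := three_lt_sqrt_thirteen
  have hs4 := sqrt_thirteen_lt
  have hαpos : 0 < α := by rw [hα]; positivity
  have hRpos : 0 < R := by rw [hR]; linarith
  have hRα : R / α = 8 - 2 * √13 := by rw [hR, hα]; exact sqrt_thirteen_sub_one_div_two_div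
  have hwf : 0 < w_f := by linarith [mul_nonneg hRpos.le he]
  refine ⟨add_sub_mul_le_two_sub_div_mul hαpos hRpos.le (by linarith) h1 h2 h3, ?_⟩
  exact mul_lt_mul_of_pos_right (by rw [hRα, hR]; linarith) hwf

theorem stmt11 (α R : ℝ)
    (hα : α = (Real.sqrt 13 + 3) / 4)
    (hR : R = (Real.sqrt 13 - 1) / 2)
    (w_i w_j w_e w_f : ℝ) (hi : 0 ≤ w_i) (hj : 0 ≤ w_j) (he : 0 ≤ w_e) (hf : 0 ≤ w_f)
    (h1 : 2 * α * w_e ≥ w_i + w_j) (h2 : w_j ≤ w_f) (h3 : w_i ≤ w_f)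
    (h4 : w_i > R * w_e) :
    w_j + w_i - R * w_e ≤ (2 - R / α) * w_f ∧ (2 - R / α) * w_f < R * w_f :=
  stmt11_general α R hα hR w_i w_j w_e w_f he h1 h2 h3 h4
end

section
/- Let α = (√13+3)/4, δ = (5−√13)/6, R = (√13−1)/2. For all nonnegative reals w_f, w_f', w_i, w_j, w_e with w_e < w_i, w_j ≤ w_e, and 2α·w_i < w_f + w_f', we have w_f + w_f' + w_j + (1−δ)·w_i − (R−1+2δ)·w_e < R·(w_f + w_f'). -/
/-! With `R - 1 = 1 / (2α)`, the hypothesis `2α·w_i < w_f + w_f'` says exactly that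
`w_i < (R - 1)(w_f + w_f')`. On the other side, `w_j ≤ w_e ≤ w_i` bounds
`w_j + (1 - δ) w_i - (R - 1 + 2δ) w_e` by `(1 - δ) w_i + (2 - R - 2δ) w_i`, which is `w_i`
because `2 - R - 3δ = 0`. -/

lemma lt_sub_one_mul_of_two_mul_lt {α R w_i F : ℝ} (hα : 0 < α) (hR : R = 1 + 1 / (2 * α))
    (h : 2 * α * w_i < F) : w_i < (R - 1) * F := by
  rwa [hR, add_sub_cancel_left, one_div, lt_inv_mul_iff₀ (by positivity)]

lemma split_charge_le {δ R w_i w_j w_e : ℝ} (hcoef : 0 ≤ 2 - R - 2 * δ)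
    (hbal : 2 - R - 3 * δ = 0) (hei : w_e ≤ w_i) (hje : w_j ≤ w_e) :
    w_j + (1 - δ) * w_i - (R - 1 + 2 * δ) * w_e ≤ w_i := by
  obtain rfl : R = 2 - 3 * δ := by linarith
  nlinarith [mul_le_mul_of_nonneg_left hei hcoef]

lemma forward_split_charge_lt {α δ R w_f w_f' w_i w_j w_e : ℝ} (hα : 0 < α)
    (hR : R = 1 + 1 / (2 * α)) (hcoef : 0 ≤ 2 - R - 2 * δ) (hbal : 2 - R - 3 * δ = 0)
    (hei : w_e ≤ w_i) (hje : w_j ≤ w_e) (hfi : 2 * α * w_i < w_f + w_f') :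
    w_f + w_f' + w_j + (1 - δ) * w_i - (R - 1 + 2 * δ) * w_e < R * (w_f + w_f') := by
  have hsplit := split_charge_le hcoef hbal hei hje
  have hforward := lt_sub_one_mul_of_two_mul_lt hα hR hfi
  linarith

lemma sqrt_thirteen_lt_five : √13 < 5 :=
  (Real.sqrt_lt' (by norm_num)).2 (by norm_num)

theorem stmt12_general (α δ R : ℝ)
    (hα : α = (Real.sqrt 13 + 3) / 4)
    (hδ : δ = (5 - Real.sqrt 13) / 6)
    (hR : R = (Real.sqrt 13 - 1) / 2)
    (w_f w_f' w_i w_j w_e : ℝ)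
    (h1 : w_e < w_i) (h2 : w_j ≤ w_e) (h3 : 2 * α * w_i < w_f + w_f') :
    w_f + w_f' + w_j + (1 - δ) * w_i - (R - 1 + 2 * δ) * w_e < R * (w_f + w_f') := by
  have hRα : R = 1 + 1 / (2 * α) := by
    have hsq : √13 ^ 2 = 13 := Real.sq_sqrt (by norm_num)
    subst hα hR
    field_simp
    nlinarith
  have hcoef : 0 ≤ 2 - R - 2 * δ := by linarith [sqrt_thirteen_lt_five]
  have hbal : 2 - R - 3 * δ = 0 := by rw [hR, hδ]; ring
  exact forward_split_charge_lt (by rw [hα]; positivity) hRα hcoef hbal h1.le h2 h3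

theorem stmt12 (α δ R : ℝ)
    (hα : α = (Real.sqrt 13 + 3) / 4)
    (hδ : δ = (5 - Real.sqrt 13) / 6)
    (hR : R = (Real.sqrt 13 - 1) / 2)
    (w_f w_f' w_i w_j w_e : ℝ)
    (hf : 0 ≤ w_f) (hf' : 0 ≤ w_f') (hi : 0 ≤ w_i) (hj : 0 ≤ w_j) (he : 0 ≤ w_e)
    (h1 : w_e < w_i) (h2 : w_j ≤ w_e) (h3 : 2 * α * w_i < w_f + w_f') :
    w_f + w_f' + w_j + (1 - δ) * w_i - (R - 1 + 2 * δ) * w_e < R * (w_f + w_f') :=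
  stmt12_general α δ R hα hδ hR w_f w_f' w_i w_j w_e h1 h2 h3
end

section
/- Let R = (1+√17)/4, α = (3+√17)/4, β = (5+√17)/4, γ = R, and fix any real δ. Define S_k = (γ+1)·α^k + δ·(β^k − α^k) − γ for all natural numbers k. Then for all k ≥ 1, (2R−2)·S_{k+1} − (R+1)·S_k + (R+1)·S_{k−1} = −(2−R). -/
/-!
`R = (1 + √17) / 4` is the positive root of `2R² - R - 2 = 0`. Consequently the characteristic
polynomial `(2R - 2)x² - (R + 1)x + (R + 1)` of the recurrence has the roots `α = R + 1/2` and
`β = R + 1`, and the constant `-γ = -R` solves the inhomogeneous equation, since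
`(2R - 2)(-R) = -(2 - R)`. Hence every `A α^k + B β^k - γ` solves the recurrence, and `S_k` is of
this form with `A = γ + 1 - δ`, `B = δ`.
-/

theorem linear_recurrence_geom_add_const {a b c d x y r : ℝ} (A B : ℝ)
    (hx : a * x ^ 2 - b * x + c = 0) (hy : a * y ^ 2 - b * y + c = 0)
    (hr : (a - b + c) * r = d) (n : ℕ) :
    a * (A * x ^ (n + 2) + B * y ^ (n + 2) + r) - b * (A * x ^ (n + 1) + B * y ^ (n + 1) + r)
      + c * (A * x ^ n + B * y ^ n + r) = d := by
  linear_combination A * x ^ n * hx + B * y ^ n * hy + hr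

theorem two_mul_sq_sub_sub_two_eq_zero : 2 * ((1 + √17) / 4) ^ 2 - (1 + √17) / 4 - 2 = 0 := by
  linear_combination (1 / 8 : ℝ) * Real.sq_sqrt (show (0 : ℝ) ≤ 17 by norm_num)

section

variable {R : ℝ} (hR : 2 * R ^ 2 - R - 2 = 0)
include hR

theorem charPoly_add_half_eq_zero :
    (2 * R - 2) * (R + 1 / 2) ^ 2 - (R + 1) * (R + 1 / 2) + (R + 1) = 0 := by
  linear_combination R * hR

theorem charPoly_add_one_eq_zero :
    (2 * R - 2) * (R + 1) ^ 2 - (R + 1) * (R + 1) + (R + 1) = 0 := by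
  linear_combination (R + 1) * hR

theorem charPoly_one_mul_neg_eq :
    (2 * R - 2 - (R + 1) + (R + 1)) * -R = -(2 - R) := by
  linear_combination -hR

end

theorem stmt16 (R α β γ δ : ℝ)
    (hR : R = (1 + Real.sqrt 17) / 4)
    (hα : α = (3 + Real.sqrt 17) / 4)
    (hβ : β = (5 + Real.sqrt 17) / 4)
    (hγ : γ = R)
    (S : ℕ → ℝ)
    (hS : ∀ k : ℕ, S k = (γ + 1) * α ^ k + δ * (β ^ k - α ^ k) - γ) :
    ∀ k : ℕ, 1 ≤ k →
      (2 * R - 2) * S (k + 1) - (R + 1) * S k + (R + 1) * S (k - 1) = -(2 - R) := by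
  have hquad : 2 * R ^ 2 - R - 2 = 0 := hR ▸ two_mul_sq_sub_sub_two_eq_zero
  have hα' : α = R + 1 / 2 := by rw [hα, hR]; ring
  have hβ' : β = R + 1 := by rw [hβ, hR]; ring
  subst hα' hβ' γ
  intro k hk
  obtain ⟨n, rfl⟩ := Nat.exists_eq_add_of_le' hk
  simp only [hS, Nat.add_sub_cancel, add_assoc, one_add_one_eq_two]
  linear_combination linear_recurrence_geom_add_const (R + 1 - δ) δ
    (charPoly_add_half_eq_zero hquad) (charPoly_add_one_eq_zero hquad)
    (charPoly_one_mul_neg_eq hquad) n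
end
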